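/- There exists a universal constant C > 0 with the following property: if a < b are real numbers, f : [a,b] → ℝ is twice continuously differentiable with |f''(ξ)| > 1 for every ξ ∈ [a,b], and ψ : [a,b] → ℂ is continuously differentiable, then for every real λ ≠ 0, | ∫_a^b e^{iλ f(ξ)} ψ(ξ) dξ | ≤ C |λ|^{-1/2} ( |ψ(b)| + ∫_a^b |ψ'(ξ)| dξ ), where C does not depend on a, b, f, ψ, or λ. -/

import Mathlib

/-!
For a phase with `φ'' ≥ μ > 0`, the derivative `φ'` grows at rate at least `μ`, so `|φ'| < √μ`
only on an interval of length at most `2 / √μ`, where the integrand is trivially bounded by `1`.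
On each of the (at most two) remaining intervals `φ'` is monotone with `|φ'| ≥ √μ`, and one
integration by parts against `1 / (i φ')` bounds the integral by `4 / √μ`, since `1 / φ'` is
monotone there and so has variation at most `2 / √μ`. Continuity makes `φ''` of constant sign, and
replacing `φ` by `-φ` conjugates the integral. The amplitude `ψ` is then brought in by
integrating by parts against the primitive `x ↦ ∫_a^x e^{iλf}`, which is bounded uniformly in
`x` by the above with `φ = λ f` and `μ = |λ|`.
-/

open MeasureTheory Complex intervalIntegral Set
open scoped ComplexConjugate

theorem norm_integral_exp_neg_mul_I (φ : ℝ → ℝ) (a b : ℝ) :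
    ‖∫ x in a..b, cexp (↑(-φ x) * I)‖ = ‖∫ x in a..b, cexp (φ x * I)‖ := by
  have h : ∀ x, cexp (↑(-φ x) * I) = conj (cexp (φ x * I)) := fun x => by
    rw [← exp_conj, map_mul, conj_ofReal, conj_I, ofReal_neg, neg_mul_comm]
  simp_rw [h, intervalIntegral_conj, RCLike.norm_conj]

theorem MonotoneOn.exists_mem_Icc_le_left_ge_right {α β : Type*}
    [ConditionallyCompleteLinearOrder α] [TopologicalSpace α] [OrderTopology α] [DenselyOrdered α]
    [LinearOrder β] [TopologicalSpace β] [OrderClosedTopology β]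
    {g : α → β} {a b : α} (hab : a ≤ b) (hg : MonotoneOn g (Icc a b))
    (hgc : ContinuousOn g (Icc a b)) (c : β) :
    ∃ t ∈ Icc a b, (t = a ∨ ∀ x ∈ Icc a t, g x ≤ c) ∧ (t = b ∨ ∀ x ∈ Icc t b, c ≤ g x) := by
  have ha : a ∈ Icc a b := left_mem_Icc.2 hab
  have hb : b ∈ Icc a b := right_mem_Icc.2 hab
  by_cases hca : c ≤ g a
  · exact ⟨a, ha, .inl rfl, .inr fun x hx => hca.trans (hg ha ⟨hx.1, hx.2⟩ hx.1)⟩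
  by_cases hbc : g b ≤ c
  · exact ⟨b, hb, .inr fun x hx => (hg ⟨hx.1, hx.2⟩ hb hx.2).trans hbc, .inl rfl⟩
  obtain ⟨t, ht, hgt⟩ := intermediate_value_Icc hab hgc ⟨(not_le.1 hca).le, (not_le.1 hbc).le⟩
  refine ⟨t, ht, .inr fun x hx => ?_, .inr fun x hx => ?_⟩
  · exact hgt ▸ hg ⟨hx.1, hx.2.trans ht.2⟩ ht hx.2
  · exact hgt ▸ hg ht ⟨ht.1.trans hx.1, hx.2⟩ hx.1

theorem norm_integral_exp_mul_I_le_of_le_abs_deriv {a b μ : ℝ} {φ φ' φ'' : ℝ → ℝ}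
    (hab : a ≤ b) (hμ : 0 < μ)
    (hφ : ∀ x ∈ Icc a b, HasDerivAt φ (φ' x) x)
    (hφ' : ∀ x ∈ Icc a b, HasDerivAt φ' (φ'' x) x)
    (hφ''c : ContinuousOn φ'' (Icc a b))
    (hφ''_nonneg : ∀ x ∈ Icc a b, 0 ≤ φ'' x)
    (hμφ' : ∀ x ∈ Icc a b, μ ≤ |φ' x|) :
    ‖∫ x in a..b, cexp (φ x * I)‖ ≤ 4 / μ := by
  rw [← uIcc_of_le hab] at hφ hφ' hφ''c hφ''_nonneg hμφ'
  have hne : ∀ x ∈ uIcc a b, (φ' x : ℂ) ≠ 0 := fun x hx =>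
    ofReal_ne_zero.2 (abs_pos.1 (hμ.trans_le (hμφ' x hx)))
  have hφc : ContinuousOn φ (uIcc a b) := fun x hx => (hφ x hx).continuousAt.continuousWithinAt
  have hφ'c : ContinuousOn φ' (uIcc a b) :=
    fun x hx => (hφ' x hx).continuousAt.continuousWithinAt
  set E : ℝ → ℂ := fun x => cexp (φ x * I) * φ'' x / (φ' x ^ 2 * I)
  have hG : ∀ x ∈ uIcc a b,
      HasDerivAt (fun x => cexp (φ x * I) / (φ' x * I)) (cexp (φ x * I) - E x) x := by
    intro x hx
    have hexp := ((hφ x hx).ofReal_comp.mul_const I).cexp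
    refine (hexp.div ((hφ' x hx).ofReal_comp.mul_const I)
      (mul_ne_zero (hne x hx) I_ne_zero)).congr_deriv ?_
    simp only [E]
    field_simp [hne x hx]
  have hexp_c : ContinuousOn (fun x => cexp (φ x * I)) (uIcc a b) := by fun_prop
  have hE_c : ContinuousOn E (uIcc a b) := by
    refine ContinuousOn.div (by fun_prop) (by fun_prop) fun x hx => ?_
    exact mul_ne_zero (pow_ne_zero 2 (hne x hx)) I_ne_zero
  have hE_norm : ∀ x ∈ uIcc a b, ‖E x‖ = φ'' x / φ' x ^ 2 := fun x hx => by
    simp only [E, norm_div, norm_mul, norm_exp_ofReal_mul_I, norm_pow, norm_I, norm_real,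
      Real.norm_eq_abs, sq_abs, abs_of_nonneg (hφ''_nonneg x hx), one_mul, mul_one]
  have hE_int : ∫ x in a..b, ‖E x‖ = (φ' a)⁻¹ - (φ' b)⁻¹ := by
    have hinv : ∀ x ∈ uIcc a b, HasDerivAt (fun x => -(φ' x)⁻¹) (φ'' x / φ' x ^ 2) x :=
      fun x hx => ((hφ' x hx).inv (ofReal_ne_zero.1 (hne x hx))).neg.congr_deriv (by ring)
    have hint : IntervalIntegrable (fun x => φ'' x / φ' x ^ 2) volume a b :=
      (hφ''c.div (hφ'c.pow 2) fun x hx => pow_ne_zero 2 (ofReal_ne_zero.1 (hne x hx)))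
        |>.intervalIntegrable
    rw [integral_congr hE_norm, integral_eq_sub_of_hasDerivAt hinv hint]
    ring
  have hinv_le : ∀ x ∈ uIcc a b, |(φ' x)⁻¹| ≤ μ⁻¹ := fun x hx => by
    rw [abs_inv]
    exact inv_anti₀ hμ (hμφ' x hx)
  have hG_norm : ∀ x, ‖cexp (φ x * I) / (φ' x * I)‖ = |(φ' x)⁻¹| := fun x => by
    rw [norm_div, norm_exp_ofReal_mul_I, norm_mul, norm_I, mul_one, norm_real, Real.norm_eq_abs,
      one_div, abs_inv]
  have ha : a ∈ uIcc a b := left_mem_uIcc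
  have hb : b ∈ uIcc a b := right_mem_uIcc
  calc ‖∫ x in a..b, cexp (φ x * I)‖
      = ‖(cexp (φ b * I) / (φ' b * I) - cexp (φ a * I) / (φ' a * I)) + ∫ x in a..b, E x‖ := by
        have hdiff := (hexp_c.intervalIntegrable (μ := volume)).sub hE_c.intervalIntegrable
        rw [← integral_eq_sub_of_hasDerivAt hG hdiff,
          ← integral_add hdiff hE_c.intervalIntegrable]
        simp only [sub_add_cancel]
    _ ≤ ‖cexp (φ b * I) / (φ' b * I)‖ + ‖cexp (φ a * I) / (φ' a * I)‖ + ∫ x in a..b, ‖E x‖ :=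
        (norm_add_le _ _).trans
          (add_le_add (norm_sub_le _ _) (norm_integral_le_integral_norm hab))
    _ ≤ μ⁻¹ + μ⁻¹ + (μ⁻¹ + μ⁻¹) := by
        rw [hE_int, hG_norm, hG_norm]
        linarith [le_abs_self (φ' a)⁻¹, neg_abs_le (φ' b)⁻¹, hinv_le a ha, hinv_le b hb]
    _ = 4 / μ := by ring

theorem norm_integral_exp_mul_I_le_of_le_deriv2 {a b μ : ℝ} {φ φ' φ'' : ℝ → ℝ}
    (hab : a ≤ b) (hμ : 0 < μ)
    (hφ : ∀ x ∈ Icc a b, HasDerivAt φ (φ' x) x)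
    (hφ' : ∀ x ∈ Icc a b, HasDerivAt φ' (φ'' x) x)
    (hφ''c : ContinuousOn φ'' (Icc a b))
    (hμφ'' : ∀ x ∈ Icc a b, μ ≤ φ'' x) :
    ‖∫ x in a..b, cexp (φ x * I)‖ ≤ 10 / √μ := by
  set δ := √μ
  have hδ : 0 < δ := Real.sqrt_pos.2 hμ
  have hφ'c : ContinuousOn φ' (Icc a b) := fun x hx => (hφ' x hx).continuousAt.continuousWithinAt
  have hgrowth : ∀ x ∈ Icc a b, ∀ y ∈ Icc a b, x ≤ y → μ * (y - x) ≤ φ' y - φ' x := by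
    refine (convex_Icc a b).mul_sub_le_image_sub_of_le_deriv hφ'c
      (fun x hx => ?_) fun x hx => ?_ <;> rw [interior_Icc] at hx
    · exact (hφ' x (Ioo_subset_Icc_self hx)).differentiableAt.differentiableWithinAt
    · exact (hφ' x (Ioo_subset_Icc_self hx)).deriv ▸ hμφ'' x (Ioo_subset_Icc_self hx)
  have hmono : MonotoneOn φ' (Icc a b) := fun x hx y hy hxy =>
    sub_nonneg.1 ((mul_nonneg hμ.le (sub_nonneg.2 hxy)).trans (hgrowth x hx y hy hxy))
  -- Split `[a, b]` at the points `s`, `t` where `φ'` crosses `-δ` and `δ`.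
  obtain ⟨s, hs, hs_left, hs_right⟩ := hmono.exists_mem_Icc_le_left_ge_right hab hφ'c (-δ)
  obtain ⟨t, ht, ht_left, ht_right⟩ := hmono.exists_mem_Icc_le_left_ge_right hab hφ'c δ
  have hpiece : ∀ c ∈ Icc a b, ∀ d ∈ Icc a b, c ≤ d → (c = d ∨ ∀ x ∈ Icc c d, δ ≤ |φ' x|) →
      ‖∫ x in c..d, cexp (φ x * I)‖ ≤ 4 / δ := by
    rintro c hc d hd hcd (rfl | hδφ')
    · rw [integral_same, norm_zero]
      positivity
    have hsub : Icc c d ⊆ Icc a b := Icc_subset_Icc hc.1 hd.2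
    exact norm_integral_exp_mul_I_le_of_le_abs_deriv hcd hδ (fun x hx => hφ x (hsub hx))
      (fun x hx => hφ' x (hsub hx)) (hφ''c.mono hsub)
      (fun x hx => hμ.le.trans (hμφ'' x (hsub hx))) hδφ'
  have hleft : ‖∫ x in a..s, cexp (φ x * I)‖ ≤ 4 / δ := by
    refine hpiece a (left_mem_Icc.2 hab) s hs hs.1 (hs_left.imp Eq.symm fun h x hx => ?_)
    exact le_abs.2 (.inr (by linarith [h x hx]))
  have hright : ‖∫ x in t..b, cexp (φ x * I)‖ ≤ 4 / δ :=
    hpiece t ht b (right_mem_Icc.2 hab) ht.2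
      (ht_right.imp id fun h x hx => le_abs.2 (.inl (h x hx)))
  have hmiddle : ‖∫ x in s..t, cexp (φ x * I)‖ ≤ 2 * δ / μ := by
    refine (norm_integral_le_of_norm_le_const fun x _ =>
      (norm_exp_ofReal_mul_I (φ x)).le).trans ?_
    rw [one_mul]
    rcases lt_trichotomy s t with hst | rfl | hts
    · have hφ's := hs_right.resolve_left (hst.trans_le ht.2).ne s ⟨le_rfl, hs.2⟩
      have hφ't := ht_left.resolve_left (hs.1.trans_lt hst).ne' t ⟨ht.1, le_rfl⟩
      rw [abs_of_pos (sub_pos.2 hst), le_div_iff₀ hμ]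
      linarith [hgrowth s hs t ht hst.le]
    · rw [sub_self, abs_zero]
      positivity
    · have hφ't := ht_right.resolve_left (hts.trans_le hs.2).ne t ⟨le_rfl, ht.2⟩
      have hφ's := hs_left.resolve_left (ht.1.trans_lt hts).ne' s ⟨hs.1, le_rfl⟩
      linarith [hgrowth t ht s hs hts.le, mul_pos hμ (sub_pos.2 hts)]
  have hφc : ContinuousOn φ (Icc a b) := fun x hx => (hφ x hx).continuousAt.continuousWithinAt
  have hint : ∀ c ∈ Icc a b, ∀ d ∈ Icc a b,
      IntervalIntegrable (fun x => cexp (φ x * I)) volume c d := fun c hc d hd =>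
    ContinuousOn.intervalIntegrable ((by fun_prop : ContinuousOn (fun x => cexp (φ x * I))
      (Icc a b)).mono (uIcc_subset_Icc hc hd))
  calc ‖∫ x in a..b, cexp (φ x * I)‖
      = ‖(∫ x in a..s, cexp (φ x * I)) + (∫ x in s..t, cexp (φ x * I)) +
          ∫ x in t..b, cexp (φ x * I)‖ := by
        rw [integral_add_adjacent_intervals (hint a (left_mem_Icc.2 hab) s hs) (hint s hs t ht),
          integral_add_adjacent_intervals (hint a (left_mem_Icc.2 hab) t ht)
            (hint t ht b (right_mem_Icc.2 hab))]
    _ ≤ 4 / δ + 2 * δ / μ + 4 / δ := norm_add₃_le.trans (by gcongr)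
    _ = 10 / δ := by
        rw [← Real.sq_sqrt hμ.le]
        field_simp
        ring

theorem norm_integral_exp_mul_I_le_of_le_abs_deriv2 {a b μ : ℝ} {φ φ' φ'' : ℝ → ℝ}
    (hab : a ≤ b) (hμ : 0 < μ)
    (hφ : ∀ x ∈ Icc a b, HasDerivAt φ (φ' x) x)
    (hφ' : ∀ x ∈ Icc a b, HasDerivAt φ' (φ'' x) x)
    (hφ''c : ContinuousOn φ'' (Icc a b))
    (hμφ'' : ∀ x ∈ Icc a b, μ ≤ |φ'' x|) :
    ‖∫ x in a..b, cexp (φ x * I)‖ ≤ 10 / √μ := by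
  rcases isPreconnected_Icc.eq_or_eq_neg_of_sq_eq hφ''c hφ''c.abs
    (fun x _ => (sq_abs (φ'' x)).symm) (fun hx => (hμ.trans_le (hμφ'' _ hx)).ne') with h | h
  · exact norm_integral_exp_mul_I_le_of_le_deriv2 hab hμ hφ hφ' hφ''c
      fun x hx => (hμφ'' x hx).trans_eq (h hx).symm
  · rw [← norm_integral_exp_neg_mul_I]
    refine norm_integral_exp_mul_I_le_of_le_deriv2 hab hμ (fun x hx => (hφ x hx).neg)
      (fun x hx => (hφ' x hx).neg) hφ''c.neg fun x hx => ?_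
    have hx' : φ'' x = -|φ'' x| := h hx
    linarith [hμφ'' x hx]

theorem norm_integral_mul_le_of_norm_primitive_le {A : Type*} [NormedRing A] [NormedAlgebra ℝ A]
    [CompleteSpace A] {a b M : ℝ} {g ψ ψ' : ℝ → A} (hab : a ≤ b)
    (hg : ContinuousOn g (Icc a b))
    (hψ : ∀ x ∈ Icc a b, HasDerivAt ψ (ψ' x) x) (hψ' : ContinuousOn ψ' (Icc a b))
    (hM : ∀ x ∈ Icc a b, ‖∫ t in a..x, g t‖ ≤ M) :
    ‖∫ x in a..b, g x * ψ x‖ ≤ M * (‖ψ b‖ + ∫ x in a..b, ‖ψ' x‖) := by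
  rw [← uIcc_of_le hab] at hg hψ hψ' hM
  set F : ℝ → A := fun x => ∫ t in a..x, g t
  have hF_c : ContinuousOn F (uIcc a b) :=
    continuousOn_primitive_interval (hg.integrableOn_compact isCompact_uIcc)
  have hF : ∀ x ∈ Ioo (min a b) (max a b), HasDerivAt F (g x) x := fun x hx =>
    integral_hasDerivAt_right
      (hg.mono (uIcc_subset_uIcc_left (Ioo_subset_Icc_self hx))).intervalIntegrable
      ((hg.mono Ioo_subset_Icc_self).stronglyMeasurableAtFilter isOpen_Ioo x hx)
      (hg.continuousAt (Icc_mem_nhds hx.1 hx.2))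
  have hψ_c : ContinuousOn ψ (uIcc a b) := fun x hx => (hψ x hx).continuousAt.continuousWithinAt
  have hparts := integral_deriv_mul_eq_sub_of_hasDerivAt hF_c hψ_c hF
    (fun x hx => hψ x (Ioo_subset_Icc_self hx)) hg.intervalIntegrable hψ'.intervalIntegrable
  rw [integral_add (hg.intervalIntegrable.mul_continuousOn hψ_c)
    (hF_c.intervalIntegrable.mul_continuousOn hψ'), ← eq_sub_iff_add_eq] at hparts
  have hFa : F a = 0 := integral_same
  rw [hparts, hFa, zero_mul, sub_zero]
  calc ‖F b * ψ b - ∫ x in a..b, F x * ψ' x‖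
      ≤ ‖F b‖ * ‖ψ b‖ + ∫ x in a..b, ‖F x‖ * ‖ψ' x‖ :=
        (norm_sub_le _ _).trans (add_le_add (norm_mul_le _ _)
          ((intervalIntegral.norm_integral_le_integral_norm hab).trans (integral_mono_on hab
            (hF_c.mul hψ').norm.intervalIntegrable (hF_c.norm.mul hψ'.norm).intervalIntegrable
            fun x _ => norm_mul_le _ _)))
    _ ≤ M * ‖ψ b‖ + ∫ x in a..b, M * ‖ψ' x‖ := by
        gcongr
        · exact hM b right_mem_uIcc
        · exact integral_mono_on hab (hF_c.norm.mul hψ'.norm).intervalIntegrable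
            (continuousOn_const.mul hψ'.norm).intervalIntegrable
            fun x hx => by gcongr; exact hM x (Icc_subset_uIcc hx)
    _ = M * (‖ψ b‖ + ∫ x in a..b, ‖ψ' x‖) := by
        rw [intervalIntegral.integral_const_mul, mul_add]

theorem stmt3 :
    ∃ C > (0:ℝ),
      ∀ (a b : ℝ), a < b →
      ∀ (f f' f'' : ℝ → ℝ),
        (∀ x ∈ Set.Icc a b, HasDerivAt f (f' x) x) →
        (∀ x ∈ Set.Icc a b, HasDerivAt f' (f'' x) x) →
        ContinuousOn f'' (Set.Icc a b) →
        (∀ ξ ∈ Set.Icc a b, 1 < |f'' ξ|) →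
      ∀ (ψ ψ' : ℝ → ℂ),
        (∀ x ∈ Set.Icc a b, HasDerivAt ψ (ψ' x) x) →
        ContinuousOn ψ' (Set.Icc a b) →
      ∀ (lam : ℝ), lam ≠ 0 →
        ‖∫ ξ in a..b, Complex.exp (Complex.I * lam * f ξ) * ψ ξ‖
          ≤ C * |lam| ^ (-(1/2) : ℝ) * (‖ψ b‖ + ∫ ξ in a..b, ‖ψ' ξ‖) := by
  refine ⟨10, by norm_num, fun a b hab f f' f'' hf hf' hf''c hf'' ψ ψ' hψ hψ'c lam hlam => ?_⟩
  have hphase : ∀ ξ, cexp (I * lam * f ξ) = cexp (↑(lam * f ξ) * I) := fun ξ => by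
    push_cast
    ring_nf
  have hfc : ContinuousOn f (Icc a b) := fun x hx => (hf x hx).continuousAt.continuousWithinAt
  have hosc : ∀ x ∈ Icc a b,
      ‖∫ ξ in a..x, cexp (I * lam * f ξ)‖ ≤ 10 * |lam| ^ (-(1/2) : ℝ) := by
    intro x hx
    have hsub : Icc a x ⊆ Icc a b := Icc_subset_Icc_right hx.2
    simp_rw [hphase]
    rw [Real.rpow_neg (abs_nonneg lam), ← Real.sqrt_eq_rpow, ← div_eq_mul_inv]
    refine norm_integral_exp_mul_I_le_of_le_abs_deriv2 hx.1 (abs_pos.2 hlam)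
      (fun ξ hξ => (hf ξ (hsub hξ)).const_mul lam) (fun ξ hξ => (hf' ξ (hsub hξ)).const_mul lam)
      (continuousOn_const.mul (hf''c.mono hsub)) fun ξ hξ => ?_
    rw [abs_mul]
    exact le_mul_of_one_le_right (abs_nonneg lam) (hf'' ξ (hsub hξ)).le
  exact norm_integral_mul_le_of_norm_primitive_le hab.le (by fun_prop) hψ hψ'c hosc
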